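/- Let ℓ ≥ 2 be an integer, let G ∈ H_ℓ, and let H be an induced theta subgraph of G some cycle of which is odd. Let P and P′ be the two ears of H that are shared by cycles of H having different parity. Then the ear of H shared by the two odd cycles of H has length 1 or length greater than max{ℓ, |P|, |P′|}. -/

import Mathlib

open SimpleGraph

variable {V : Type*}

namespace SimpleGraph

/-- The internal vertices of a walk, as a list. -/
def Walk.interior {G : SimpleGraph V} {u v : V} (p : G.Walk u v) : List V :=
  p.support.tail.dropLast

/-- A hole: an induced cycle of length at least `4`. -/
def IsHole (G : SimpleGraph V) {v : V} (C : G.Walk v v) : Prop :=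
  C.IsCycle ∧ 4 ≤ C.length ∧
    ∀ x ∈ C.support, ∀ y ∈ C.support, G.Adj x y → s(x, y) ∈ C.edges

/-- An even hole: a hole of even length. -/
def IsEvenHole (G : SimpleGraph V) {v : V} (C : G.Walk v v) : Prop :=
  G.IsHole C ∧ Even C.length

/-- `G ∈ H_ℓ`: `G` has girth `2ℓ` and no even hole of length greater than `2ℓ`. -/
def InFamilyH (G : SimpleGraph V) (ℓ : ℕ) : Prop :=
  G.girth = 2 * ℓ ∧
    ∀ (v : V) (C : G.Walk v v), G.IsHole C → Even C.length → C.length ≤ 2 * ℓ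

/-- `G` has a `K1`-cut: a vertex whose deletion disconnects `G`. -/
def HasK1Cut (G : SimpleGraph V) : Prop :=
  ∃ x : V, ¬ (G.induce {y : V | y ≠ x}).Connected

/-- `G` has a `K2`-cut: a pair of adjacent vertices whose deletion disconnects `G`. -/
def HasK2Cut (G : SimpleGraph V) : Prop :=
  ∃ x y : V, G.Adj x y ∧ ¬ (G.induce {z : V | z ≠ x ∧ z ≠ y}).Connected

/-- `P` is an `(s,t)`-jump over the hole `C`: an induced path with both ends on `C`
whose internal vertices avoid `C`. -/
def IsJump (G : SimpleGraph V) {v s t : V} (C : G.Walk v v) (P : G.Walk s t) : Prop :=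
  P.IsPath ∧
    (∀ x ∈ P.support, ∀ y ∈ P.support, G.Adj x y → s(x, y) ∈ P.edges) ∧
    s ∈ C.support ∧ t ∈ C.support ∧
    ∀ x ∈ P.interior, x ∉ C.support

/-- `P` is a short `(s,t)`-jump over `C`: a jump with non-adjacent ends such that no vertex
of `C` other than `s, t` has a neighbour among the internal vertices of `P`. -/
def IsShortJump (G : SimpleGraph V) {v s t : V} (C : G.Walk v v) (P : G.Walk s t) : Prop :=
  G.IsJump C P ∧ ¬ G.Adj s t ∧
    ∀ x ∈ C.support, x ≠ s → x ≠ t → ∀ y ∈ P.interior, ¬ G.Adj x y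

/-- A short `(s,t)`-jump `P` over an even hole `C` is of type-o if the cycle formed by `P`
together with an `(s,t)`-arc of `C` is odd.  (For an even hole both arcs give the same parity.) -/
def JumpTypeO (G : SimpleGraph V) {v s t : V} (C : G.Walk v v) (P : G.Walk s t) : Prop :=
  ∃ Q : G.Walk s t, Q.IsPath ∧ (∀ e ∈ Q.edges, e ∈ C.edges) ∧ Odd (P.length + Q.length)

/-- A short `(s,t)`-jump `P` over an even hole `C` is of type-e if the cycle formed by `P`
together with an `(s,t)`-arc of `C` is even. -/
def JumpTypeE (G : SimpleGraph V) {v s t : V} (C : G.Walk v v) (P : G.Walk s t) : Prop :=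
  ∃ Q : G.Walk s t, Q.IsPath ∧ (∀ e ∈ Q.edges, e ∈ C.edges) ∧ Even (P.length + Q.length)

/-- `P` is a local `(s,t)`-jump over `C` across the single vertex `c`:
`s, c, t` are consecutive on `C`, the ends `s, t` are non-adjacent, `c` has a neighbour among the
internal vertices of `P`, and no other vertex of `C` has a neighbour among them. -/
def IsLocalJumpAcrossOne (G : SimpleGraph V) {v s t : V} (C : G.Walk v v) (P : G.Walk s t)
    (c : V) : Prop :=
  G.IsJump C P ∧ ¬ G.Adj s t ∧ s(s, c) ∈ C.edges ∧ s(c, t) ∈ C.edges ∧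
    (∃ y ∈ P.interior, G.Adj c y) ∧
    ∀ x ∈ C.support, x ≠ s → x ≠ c → x ≠ t → ∀ y ∈ P.interior, ¬ G.Adj x y

/-- The vertices `a, b, c, d` appear on the cycle `C` in this cyclic order. -/
def InCyclicOrder {G : SimpleGraph V} {v : V} (C : G.Walk v v) (a b c d : V) : Prop :=
  ∃ l1 l2 l3 l4 : List V,
    C.support.tail ~r (a :: (l1 ++ b :: (l2 ++ c :: (l3 ++ d :: l4))))

/-- Two jumps over `C`, with ends `u1, v1` and `u2, v2` respectively, are crossing if their
ends are four distinct vertices interleaving on `C`. -/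
def Crossing {G : SimpleGraph V} {v : V} (C : G.Walk v v) (u1 v1 u2 v2 : V) : Prop :=
  [u1, v1, u2, v2].Nodup ∧
    (InCyclicOrder C u1 u2 v1 v2 ∨ InCyclicOrder C u1 v2 v1 u2)

/-- Two jumps over `C` are parallel if they are not crossing. -/
def ParallelJumps {G : SimpleGraph V} {v : V} (C : G.Walk v v) (u1 v1 u2 v2 : V) : Prop :=
  ¬ Crossing C u1 v1 u2 v2

/-- The distance between `s` and `t` along the cycle `C`. -/
noncomputable def cycleDist {G : SimpleGraph V} {v : V} (C : G.Walk v v) (s t : V) : ℕ :=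
  (SimpleGraph.fromEdgeSet {e : Sym2 V | e ∈ C.edges}).dist s t

/-- `P1, P2, P3` form an induced theta subgraph of `G`:  three pairwise distinct,
pairwise internally disjoint induced-union paths joining two distinct vertices `a, b`. -/
def IsInducedTheta (G : SimpleGraph V) {a b : V} (P1 P2 P3 : G.Walk a b) : Prop :=
  a ≠ b ∧ P1.IsPath ∧ P2.IsPath ∧ P3.IsPath ∧
  P1 ≠ P2 ∧ P1 ≠ P3 ∧ P2 ≠ P3 ∧
  (∀ x ∈ P1.interior, x ∉ P2.interior) ∧
  (∀ x ∈ P1.interior, x ∉ P3.interior) ∧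
  (∀ x ∈ P2.interior, x ∉ P3.interior) ∧
  (∀ x, (x ∈ P1.support ∨ x ∈ P2.support ∨ x ∈ P3.support) →
    ∀ y, (y ∈ P1.support ∨ y ∈ P2.support ∨ y ∈ P3.support) →
      G.Adj x y → (s(x, y) ∈ P1.edges ∨ s(x, y) ∈ P2.edges ∨ s(x, y) ∈ P3.edges))

end SimpleGraph

/-! Since `|P1| + |P3|` and `|P2| + |P3|` are odd, the cycle `P1 ∪ P2` is even. Unless `P3` is
the edge `ab`, the theta being induced makes this cycle an even hole, so `|P1| + |P2| ≤ 2ℓ`, and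
the girth forces equality. The girth bounds `|Pi| + |P3| ≥ 2ℓ`, sharpened by parity, then give
`|P3| > |P1|, |P2|`, hence also `|P3| > ℓ`. -/

namespace SimpleGraph

variable {G : SimpleGraph V}

namespace Walk

variable {u v : V}

lemma mem_interior_of_mem_support {p : G.Walk u v} {x : V} (hx : x ∈ p.support)
    (hxu : x ≠ u) (hxv : x ≠ v) : x ∈ p.interior := by
  have hx' : x ∈ p.support.tail := ((p.mem_support_iff).mp hx).resolve_left hxu
  refine List.mem_dropLast_of_mem_of_ne_getLast hx' ?_
  rwa [List.getLast_tail, getLast_support]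

lemma eq_or_eq_of_mem_support_of_mem_support {p q : G.Walk u v}
    (hdisj : ∀ x ∈ p.interior, x ∉ q.interior) {x : V} (hp : x ∈ p.support)
    (hq : x ∈ q.support) : x = u ∨ x = v := by
  by_contra! h
  exact hdisj x (mem_interior_of_mem_support hp h.1 h.2) (mem_interior_of_mem_support hq h.1 h.2)

lemma eq_of_length_eq_one : ∀ {p q : G.Walk u v}, p.length = 1 → q.length = 1 → p = q
  | .cons _ .nil, .cons _ .nil, _, _ => rfl

lemma IsPath.length_eq_one_of_mem_edges_of_mem_ends {p : G.Walk u v} (hp : p.IsPath)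
    {x y : V} (he : s(x, y) ∈ p.edges) (hx : x = u ∨ x = v) (hy : y = u ∨ y = v) :
    p.length = 1 := by
  have hxy : x ≠ y := (p.adj_of_mem_edges he).ne
  rcases hx with rfl | rfl <;> rcases hy with rfl | rfl
  · exact absurd rfl hxy
  · exact hp.length_eq_one_of_mem_edges he
  · exact hp.length_eq_one_of_mem_edges (Sym2.eq_swap ▸ he)
  · exact absurd rfl hxy

lemma IsPath.start_notMem_support_tail {p : G.Walk u v} (hp : p.IsPath) :
    u ∉ p.support.tail :=
  (List.nodup_cons.mp (p.cons_tail_support ▸ hp.support_nodup)).1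

lemma IsPath.isCycle_append_reverse {p q : G.Walk u v} (hp : p.IsPath) (hq : q.IsPath)
    (huv : u ≠ v) (hpq : p ≠ q) (hdisj : ∀ x ∈ p.interior, x ∉ q.interior) :
    (p.append q.reverse).IsCycle := by
  refine hp.isCycle_append hq.reverse ?_ ?_
  · intro x hxp hxq
    have hxq' : x ∈ q.support := by simpa using List.mem_of_mem_tail hxq
    rcases eq_or_eq_of_mem_support_of_mem_support hdisj (List.mem_of_mem_tail hxp) hxq'
      with rfl | rfl
    · exact hp.start_notMem_support_tail hxp
    · exact hq.reverse.start_notMem_support_tail hxq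
  · by_contra! h
    rw [length_reverse] at h
    have hp0 : p.length ≠ 0 := fun h => huv (eq_of_length_eq_zero h)
    have hq0 : q.length ≠ 0 := fun h => huv (eq_of_length_eq_zero h)
    exact hpq (eq_of_length_eq_one (by omega) (by omega))

end Walk

lemma InFamilyH.two_mul_le_length {ℓ : ℕ} (hG : G.InFamilyH ℓ) {v : V} {C : G.Walk v v}
    (hC : C.IsCycle) : 2 * ℓ ≤ C.length :=
  hG.1 ▸ G.girth_le_length hC

lemma IsInducedTheta.isHole_append_reverse {a b : V} {P1 P2 P3 : G.Walk a b}
    (h : G.IsInducedTheta P1 P2 P3) (hlen : 4 ≤ P1.length + P2.length) (h3 : P3.length ≠ 1) :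
    G.IsHole (P1.append P2.reverse) := by
  obtain ⟨hab, hp1, hp2, hp3, h12, -, -, hI12, hI13, hI23, hind⟩ := h
  refine ⟨hp1.isCycle_append_reverse hp2 hab h12 hI12, by simpa using hlen, ?_⟩
  have ends : ∀ z, z ∈ P1.support ∨ z ∈ P2.support → z ∈ P3.support → z = a ∨ z = b := by
    rintro z (hz | hz) hz3
    exacts [Walk.eq_or_eq_of_mem_support_of_mem_support hI13 hz hz3,
      Walk.eq_or_eq_of_mem_support_of_mem_support hI23 hz hz3]
  intro x hx y hy hxy
  simp only [Walk.mem_support_append_iff, Walk.support_reverse, List.mem_reverse] at hx hy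
  simp only [Walk.edges_append, Walk.edges_reverse, List.mem_append, List.mem_reverse]
  rcases hind x (by tauto) y (by tauto) hxy with he | he | he
  · exact .inl he
  · exact .inr he
  -- `P3` meets `P1 ∪ P2` only in `a` and `b`, so this edge would be `ab`
  · exact absurd (hp3.length_eq_one_of_mem_edges_of_mem_ends he
      (ends x hx (P3.fst_mem_support_of_mem_edges he))
      (ends y hy (P3.snd_mem_support_of_mem_edges he))) h3

end SimpleGraph

theorem theta_some_cycle_odd_general {V : Type*} (G : SimpleGraph V)
    (ℓ : ℕ) (hℓ : 2 ≤ ℓ) (hG : G.InFamilyH ℓ)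
    {a b : V} (P1 P2 P3 : G.Walk a b) (hTheta : G.IsInducedTheta P1 P2 P3)
    (h13 : Odd (P1.length + P3.length))
    (h23 : Odd (P2.length + P3.length)) :
    P3.length = 1 ∨ P3.length > max ℓ (max P1.length P2.length) := by
  rcases eq_or_ne P3.length 1 with hP3 | hP3
  · exact .inl hP3
  right
  have ⟨hab, hp1, hp2, hp3, h12, h13', h23', hI12, hI13, hI23, _⟩ := hTheta
  have g12 := hG.two_mul_le_length (hp1.isCycle_append_reverse hp2 hab h12 hI12)
  have g13 := hG.two_mul_le_length (hp1.isCycle_append_reverse hp3 hab h13' hI13)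
  have g23 := hG.two_mul_le_length (hp2.isCycle_append_reverse hp3 hab h23' hI23)
  simp only [Walk.length_append, Walk.length_reverse] at g12 g13 g23
  rw [Nat.odd_iff] at h13 h23
  have hhole := hTheta.isHole_append_reverse (by omega) hP3
  have heven : Even (P1.append P2.reverse).length := by
    simp only [Walk.length_append, Walk.length_reverse, Nat.even_iff]
    omega
  have hle := hG.2 a _ hhole heven
  simp only [Walk.length_append, Walk.length_reverse] at hle
  omega

/-- in an induced theta subgraph of a graph in `H_ℓ` having an odd cycle, the ear
`P3` shared by the two odd cycles has length 1 or length greater than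
`max {ℓ, |P1|, |P2|}`, where `P1, P2` are the ears shared by cycles of different parity. -/
theorem theta_some_cycle_odd {V : Type*} [Fintype V] (G : SimpleGraph V)
    (ℓ : ℕ) (hℓ : 2 ≤ ℓ) (hG : G.InFamilyH ℓ)
    {a b : V} (P1 P2 P3 : G.Walk a b) (hTheta : G.IsInducedTheta P1 P2 P3)
    (h13 : Odd (P1.length + P3.length))
    (h23 : Odd (P2.length + P3.length)) :
    P3.length = 1 ∨ P3.length > max ℓ (max P1.length P2.length) :=
  theta_some_cycle_odd_general G ℓ hℓ hG P1 P2 P3 hTheta h13 h23
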